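/- arXiv:0905.3108 — 5 statements merged into one kernel-verified Lean document; each statement's English description precedes it below -/
import Mathlib

section
/- In a Euclidean frame (W,R), for every world w₀, the reflexive-transitive reachability set R*(w₀) equals {w₀} ∪ R(R(w₀)). -/
/-!
In a Euclidean frame every world with a predecessor is reflexive, so `R v w` gives `R w v`, and
then every successor of `w` is a successor of `v`. Hence `{w₀} ∪ R(R(w₀))` is closed under `R`:
a step from `w ∈ R(v)` lands in `R(v)`, and a step from `w₀` lands in `R(w₀) ⊆ R(R(w₀))`.
-/

section Euclidean

variable {α : Type*} {R : α → α → Prop}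

theorem rel_self_of_rel (hR : ∀ x y z, R x y → R x z → R y z)
    {x y : α} (hxy : R x y) : R y y :=
  hR x y y hxy hxy

theorem rel_symm_of_rel_of_rel (hR : ∀ x y z, R x y → R x z → R y z)
    {x y z : α} (hxy : R x y) (hyz : R y z) : R z y :=
  hR y z y hyz (rel_self_of_rel hR hxy)

theorem rel_of_rel_of_rel_of_rel (hR : ∀ x y z, R x y → R x z → R y z)
    {x y z u : α} (hxy : R x y) (hyz : R y z) (hzu : R z u) : R y u :=
  hR z y u (rel_symm_of_rel_of_rel hR hxy hyz) hzu

theorem reflTransGen_iff_eq_or_rel_rel (hR : ∀ x y z, R x y → R x z → R y z)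
    {a b : α} : Relation.ReflTransGen R a b ↔ b = a ∨ ∃ v, R a v ∧ R v b := by
  constructor
  · intro hab
    induction hab with
    | refl => exact Or.inl rfl
    | tail _ hcd ih =>
      rcases ih with rfl | ⟨v, hav, hvc⟩
      · exact Or.inr ⟨_, hcd, rel_self_of_rel hR hcd⟩
      · exact Or.inr ⟨v, hav, rel_of_rel_of_rel_of_rel hR hav hvc hcd⟩
  · rintro (rfl | ⟨v, hav, hvb⟩)
    · exact .refl
    · exact .head hav (.single hvb)

end Euclidean

theorem stmt3 {W : Type} (R : W → W → Prop)
    (hEucl : ∀ x y z, R x y → R x z → R y z) (w₀ : W) :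
    {w | Relation.ReflTransGen R w₀ w} =
      {w₀} ∪ {w | ∃ v, R w₀ v ∧ R v w} := by
  ext w
  exact reflTransGen_iff_eq_or_rel_rel hEucl
end

section
/- Let 𝔄 be a transitive structure of depth d, breadth b, and width c (all finite), and let w be a world of 𝔄. Then the substructure generated by {w} contains at most n worlds, where n = c if b = 0, n = c·(d+1) if b = 1, and n = c·(b^{d+1} − 1)/(b − 1) if b ≥ 2. -/
/-- The R-clique of `w`: `w` together with all worlds R-equivalent to `w`. -/
def Clique {W : Type} (R : W → W → Prop) (w : W) : Set W :=
  {v | v = w ∨ (R w v ∧ R v w)}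

/-- `w₂` is a strict R-successor of `w₁`. -/
def StrictSucc {W : Type} (R : W → W → Prop) (w₁ w₂ : W) : Prop :=
  R w₁ w₂ ∧ ¬ R w₂ w₁

/-- `w₂` is a direct R-successor of `w₁`. -/
def DirectSucc {W : Type} (R : W → W → Prop) (w₁ w₂ : W) : Prop :=
  StrictSucc R w₁ w₂ ∧
    ∀ w, R w₁ w → R w w₂ → w ∈ Clique R w₁ ∨ w ∈ Clique R w₂

/-!
Every world reachable from `w` lies in the clique of `w` or is reachable from a direct successor
of `w`: since finite depth makes the strict-successor relation well-founded, a minimal strict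
successor of `w` below the target is direct. Direct successors fall into at most `b` cliques and
worlds of one clique reach the same worlds, so one representative per clique suffices. If all
strict chains from `w` are shorter than `k + 1`, those from a direct successor are shorter than `k`;
hence at most `c + b · N k` worlds are reachable, where `N k = c (1 + b + ⋯ + b^(k-1))`.
-/

namespace TransitiveFrame

open Relation

variable {W : Type} {R : W → W → Prop}

variable (R) in
def IsStrictChain {k : ℕ} (ws : Fin (k + 1) → W) : Prop :=
  ∀ i : Fin k, StrictSucc R (ws i.castSucc) (ws i.succ)

lemma IsStrictChain.cons {k : ℕ} {ws : Fin (k + 1) → W} (h : IsStrictChain R ws) {w : W}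
    (hw : StrictSucc R w (ws 0)) : IsStrictChain R (Fin.cons w ws : Fin (k + 2) → W) := by
  intro i
  induction i using Fin.cases with
  | zero => simpa using hw
  | succ j => simpa [← Fin.succ_castSucc] using h j

lemma wellFounded_strictSucc {d : ℕ}
    (hdepth : ∀ k (ws : Fin (k + 1) → W), IsStrictChain R ws → k ≤ d) :
    WellFounded (StrictSucc R) := by
  refine wellFounded_iff_isEmpty_descending_chain.2 ⟨fun ⟨f, hf⟩ => ?_⟩
  have hchain : IsStrictChain R fun i : Fin (d + 2) => f i.rev := fun i => by
    simpa [Fin.rev_castSucc, Fin.rev_succ] using hf i.rev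
  exact absurd (hdepth _ _ hchain) (by omega)

lemma mem_clique_self (w : W) : w ∈ Clique R w := Or.inl rfl

section Transitive

variable [IsTrans W R]

lemma disjoint_clique_of_notMem {u t : W} (h : u ∉ Clique R t) :
    Disjoint (Clique R u) (Clique R t) := by
  refine Set.disjoint_left.2 fun z hzu hzt => h ?_
  rcases hzu with rfl | ⟨huz, hzu⟩ <;> rcases hzt with rfl | ⟨htz, hzt⟩
  · exact mem_clique_self _
  · exact Or.inr ⟨htz, hzt⟩
  · exact Or.inr ⟨hzu, huz⟩
  · exact Or.inr ⟨trans_of R htz hzu, trans_of R huz hzt⟩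

lemma exists_directSucc_reflGen (hwf : WellFounded (StrictSucc R)) {w v : W}
    (hv : StrictSucc R w v) : ∃ u, DirectSucc R w u ∧ ReflGen R u v := by
  obtain ⟨u, ⟨hwu, huv⟩, hmin⟩ := hwf.has_min {u | StrictSucc R w u ∧ ReflGen R u v}
    ⟨v, hv, .refl⟩
  refine ⟨u, ⟨hwu, fun y hwy hyu => ?_⟩, huv⟩
  by_contra! hy
  exact hmin y ⟨⟨hwy, fun hyw => hy.1 (Or.inr ⟨hwy, hyw⟩)⟩, trans_of (ReflGen R) (.single hyu) huv⟩
    ⟨hyu, fun huy => hy.2 (Or.inr ⟨huy, hyu⟩)⟩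

lemma setOf_reflGen_subset (hwf : WellFounded (StrictSucc R)) {w : W} {T : Finset W}
    (hT : ∀ u, DirectSucc R w u → ∃ t ∈ T, u ∈ Clique R t) :
    {v | ReflGen R w v} ⊆ Clique R w ∪ ⋃ t ∈ T, {v | ReflGen R t v} := by
  rintro v (_ | hwv)
  · exact Or.inl (mem_clique_self w)
  by_cases hvw : R v w
  · exact Or.inl (Or.inr ⟨hwv, hvw⟩)
  obtain ⟨u, hu, huv⟩ := exists_directSucc_reflGen hwf ⟨hwv, hvw⟩
  obtain ⟨t, ht, hut⟩ := hT u hu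
  have htu : ReflGen R t u := by
    rcases hut with rfl | ⟨htu, -⟩
    exacts [.refl, .single htu]
  exact Or.inr (Set.mem_biUnion ht (trans_of (ReflGen R) htu huv))

end Transitive

section Breadth

variable {b : ℕ}
  (hbreadth : ∀ k (w : W) (ws : Fin k → W), (∀ i, DirectSucc R w (ws i)) →
    (∀ i j, i ≠ j → Disjoint (Clique R (ws i)) (Clique R (ws j))) → k ≤ b)
include hbreadth

lemma card_le_of_pairwiseDisjoint {w : W} {T : Finset W} (hT : ∀ t ∈ T, DirectSucc R w t)
    (hdisj : (T : Set W).PairwiseDisjoint (Clique R)) : T.card ≤ b :=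
  hbreadth _ w (fun i => T.equivFin.symm i) (fun i => hT _ (T.equivFin.symm i).2)
    fun i j hij => hdisj (T.equivFin.symm i).2 (T.equivFin.symm j).2
      (by simpa [Subtype.ext_iff] using T.equivFin.symm.injective.ne hij)

variable [IsTrans W R]

lemma exists_finset_directSucc_cover (w : W) :
    ∃ T : Finset W, T.card ≤ b ∧ (∀ t ∈ T, DirectSucc R w t) ∧
      ∀ u, DirectSucc R w u → ∃ t ∈ T, u ∈ Clique R t := by
  classical
  by_contra! hcover
  have hgrow : ∀ n, ∃ T : Finset W, T.card = n ∧ (∀ t ∈ T, DirectSucc R w t) ∧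
      (T : Set W).PairwiseDisjoint (Clique R) := by
    intro n
    induction n with
    | zero => exact ⟨∅, rfl, by simp, by simp⟩
    | succ n ih =>
      obtain ⟨T, hcard, hT, hdisj⟩ := ih
      obtain ⟨u, hu, hnot⟩ := hcover T (card_le_of_pairwiseDisjoint hbreadth hT hdisj) hT
      have huT : u ∉ T := fun h => hnot u h (mem_clique_self u)
      refine ⟨insert u T, by rw [Finset.card_insert_of_notMem huT, hcard], ?_, ?_⟩
      · simpa [hu] using hT
      · rw [Finset.coe_insert]
        exact hdisj.insert fun t ht _ => disjoint_clique_of_notMem (hnot t ht)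
  obtain ⟨T, hcard, hT, hdisj⟩ := hgrow (b + 1)
  have := card_le_of_pairwiseDisjoint hbreadth hT hdisj
  omega

theorem encard_setOf_reflGen_le (hwf : WellFounded (StrictSucc R)) {c : ℕ}
    (hwidth : ∀ w, (Clique R w).encard ≤ c) (k : ℕ) (w : W)
    (hheight : ∀ m (ws : Fin (m + 1) → W), IsStrictChain R ws → ws 0 = w → m < k) :
    {v | ReflGen R w v}.encard ≤ (c * ∑ i ∈ Finset.range k, b ^ i : ℕ) := by
  induction k generalizing w with
  | zero => exact absurd (hheight 0 (fun _ => w) (fun i => i.elim0) rfl) (Nat.not_lt_zero 0)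
  | succ k ih =>
    obtain ⟨T, hcard, hT, hcover⟩ := exists_finset_directSucc_cover hbreadth w
    have hsucc : ∀ t ∈ T, {v | ReflGen R t v}.encard ≤ (c * ∑ i ∈ Finset.range k, b ^ i : ℕ) :=
      fun t ht => ih t fun m ws hws h0 => by
        have := hheight (m + 1) _ (hws.cons (h0 ▸ (hT t ht).1)) rfl
        omega
    calc {v | ReflGen R w v}.encard
        ≤ (Clique R w ∪ ⋃ t ∈ T, {v | ReflGen R t v}).encard :=
          Set.encard_le_encard (setOf_reflGen_subset hwf hcover)
      _ ≤ (Clique R w).encard + ∑ t ∈ T, {v | ReflGen R t v}.encard :=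
          (Set.encard_union_le _ _).trans (add_le_add_right (T.set_encard_biUnion_le _) _)
      _ ≤ c + T.card • ((c * ∑ i ∈ Finset.range k, b ^ i : ℕ) : ℕ∞) :=
          add_le_add (hwidth w) (T.sum_le_card_nsmul _ _ hsucc)
      _ ≤ c + b * ((c * ∑ i ∈ Finset.range k, b ^ i : ℕ) : ℕ∞) := by
          rw [nsmul_eq_mul]
          gcongr
      _ = (c * ∑ i ∈ Finset.range (k + 1), b ^ i : ℕ) := by
          simp only [Finset.sum_range_succ', pow_succ', ← Finset.mul_sum]
          push_cast
          ring

end Breadth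

lemma mul_geomSum_eq_ite (b c d : ℕ) :
    c * ∑ i ∈ Finset.range (d + 1), b ^ i =
      if b = 0 then c else if b = 1 then c * (d + 1) else c * (b ^ (d + 1) - 1) / (b - 1) := by
  split_ifs with hb0 hb1
  · simp [hb0, Finset.sum_range_succ']
  · simp [hb1]
  · rw [Nat.geomSum_eq (by omega), Nat.mul_div_assoc _ (Nat.sub_one_dvd_pow_sub_one _ _)]

end TransitiveFrame

theorem stmt11_general {W : Type} (R : W → W → Prop) (hTr : Transitive R)
    (d b c : ℕ)
    (hdepth : ∀ k, ∀ ws : Fin (k + 1) → W,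
      (∀ i : Fin k, StrictSucc R (ws i.castSucc) (ws i.succ)) → k ≤ d)
    (hbreadth : ∀ k (w : W) (ws : Fin k → W),
      (∀ i, DirectSucc R w (ws i)) →
      (∀ i j, i ≠ j → Disjoint (Clique R (ws i)) (Clique R (ws j))) → k ≤ b)
    (hwidth : ∀ w, (Clique R w).Finite ∧ (Clique R w).ncard ≤ c)
    (w : W) :
    {v | Relation.ReflTransGen R w v}.Finite ∧
    {v | Relation.ReflTransGen R w v}.ncard ≤
      (if b = 0 then c
       else if b = 1 then c * (d + 1)
       else c * (b ^ (d + 1) - 1) / (b - 1)) := by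
  have : IsTrans W R := ⟨fun _ _ _ h₁ h₂ => hTr h₁ h₂⟩
  have hbound := TransitiveFrame.encard_setOf_reflGen_le hbreadth
    (TransitiveFrame.wellFounded_strictSucc hdepth)
    (fun v => Set.encard_le_coe_iff_finite_ncard_le.2 (hwidth v)) (d + 1) w
    fun m ws hws _ => Nat.lt_succ_of_le (hdepth m ws hws)
  rw [Relation.reflTransGen_eq_reflGen, ← TransitiveFrame.mul_geomSum_eq_ite]
  exact Set.encard_le_coe_iff_finite_ncard_le.1 hbound

theorem stmt11 {W : Type} (R : W → W → Prop) (hTr : Transitive R)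
    (V : ℕ → W → Prop) (d b c : ℕ)
    (hdepth : ∀ k, ∀ ws : Fin (k + 1) → W,
      (∀ i : Fin k, StrictSucc R (ws i.castSucc) (ws i.succ)) → k ≤ d)
    (hbreadth : ∀ k (w : W) (ws : Fin k → W),
      (∀ i, DirectSucc R w (ws i)) →
      (∀ i j, i ≠ j → Disjoint (Clique R (ws i)) (Clique R (ws j))) → k ≤ b)
    (hwidth : ∀ w, (Clique R w).Finite ∧ (Clique R w).ncard ≤ c)
    (w : W) :
    {v | Relation.ReflTransGen R w v}.Finite ∧
    {v | Relation.ReflTransGen R w v}.ncard ≤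
      (if b = 0 then c
       else if b = 1 then c * (d + 1)
       else c * (b ^ (d + 1) - 1) / (b - 1)) :=
  stmt11_general R hTr d b c hdepth hbreadth hwidth w
end

section
/- Let 𝔄 = (W,R,V) be a transitive structure and define, for fixed propositional formulas χ₁,…,χ_m and bounds D₁,…,D_m, the function d^j(w) = min(D_j+1, |{v : R* w v and 𝔄 ⊨_v χ_j}|), where R* is the reflexive closure of R. Let R_d = {(w₁,w₂) ∈ R | d^j(w₁) = d^j(w₂) for all j}, and let R' be the transitive closure of R ∪ R_d⁻¹. Then in the resulting structure 𝔄' = (W, R', V), the chain length of strict R'-successors is bounded: any sequence w₀,…,w_k in which each w_i is a strict R'-successor of w_{i−1} has k ≤ Σ_j D_j + m. -/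
/-!
Each step `R a b` can only shrink the truncated counts `d^j`, and a step of `R_d⁻¹` keeps
them all equal. Conversely a step along which no `d^j` changes can be reversed, so an
`R'`-path along which the count vector stays constant can be walked back. Hence along a
strict `R'`-successor the vector `(d^j)_j` strictly decreases in the product order, and so
does its sum, a natural number of size at most `Σ_j (D_j + 1)`.
-/

/-- `dcount S χ D w = min (D + 1, |{v : S* w v and χ v}|)`, where `S*` is the
    reflexive closure of `S`. -/
noncomputable def dcount {W : Type} (S : W → W → Prop) (χ : W → Prop) (D : ℕ)
    (w : W) : ℕ∞ :=
  min ((D : ℕ∞) + 1) {v | (v = w ∨ S w v) ∧ χ v}.encard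

section Potential

variable {α β : Type*} [PartialOrder β] {r : α → α → Prop} {f : α → β}

theorem Relation.TransGen.antitone_of_step (hf : ∀ a b, r a b → f b ≤ f a) {a b : α}
    (hab : Relation.TransGen r a b) : f b ≤ f a := by
  have := Relation.TransGen.lift (p := (· ≥ ·)) f hf a b hab
  rwa [Relation.transGen_eq_self] at this

theorem Relation.TransGen.swap_of_eq (hf : ∀ a b, r a b → f b ≤ f a)
    (hrev : ∀ a b, r a b → f a = f b → r b a) {a b : α}
    (hab : Relation.TransGen r a b) (heq : f a = f b) : Relation.TransGen r b a := by
  induction hab with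
  | single h => exact .single (hrev _ _ h heq)
  | @tail c d hac hcd ih =>
    have hcd_eq : f c = f d :=
      le_antisymm (heq ▸ hac.antitone_of_step hf) (hf _ _ hcd)
    exact .head (hrev _ _ hcd hcd_eq) (ih (heq.trans hcd_eq.symm))

theorem Relation.TransGen.lt_of_not_transGen (hf : ∀ a b, r a b → f b ≤ f a)
    (hrev : ∀ a b, r a b → f a = f b → r b a) {a b : α}
    (hab : Relation.TransGen r a b) (hba : ¬ Relation.TransGen r b a) : f b < f a :=
  (hab.antitone_of_step hf).lt_of_ne fun heq => hba (hab.swap_of_eq hf hrev heq.symm)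

end Potential

theorem ENat.sum_toNat_lt_sum_toNat {ι : Type*} [Fintype ι] {x y : ι → ℕ∞}
    (hy : ∀ i, y i ≠ ⊤) (hxy : x < y) : ∑ i, (x i).toNat < ∑ i, (y i).toNat := by
  obtain ⟨hle, i, hlt⟩ := Pi.lt_def.mp hxy
  refine Finset.sum_lt_sum (fun j _ => ENat.toNat_le_toNat (hle j) (hy j))
    ⟨i, Finset.mem_univ i, ?_⟩
  rwa [← ENat.natCast_lt_natCast, ENat.natCast_toNat (hy i),
    ENat.natCast_toNat (ne_top_of_lt hlt)]

theorem Fin.le_of_strictAnti_of_le {k N : ℕ} {g : Fin (k + 1) → ℕ} (hg : StrictAnti g)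
    (hN : ∀ i, g i ≤ N) : k ≤ N := by
  have := Fin.le_of_injective (fun i => (⟨g i, Nat.lt_succ_of_le (hN i)⟩ : Fin (N + 1)))
    fun i j hij => hg.injective (congrArg Fin.val hij)
  omega

section dcount

variable {W : Type} {S : W → W → Prop} {χ : W → Prop} {D : ℕ}

theorem dcount_le (w : W) : dcount S χ D w ≤ D + 1 :=
  min_le_left _ _

theorem dcount_ne_top (w : W) : dcount S χ D w ≠ ⊤ :=
  ne_top_of_le_ne_top (by simp) (dcount_le w)

theorem dcount_toNat_le (w : W) : (dcount S χ D w).toNat ≤ D + 1 := by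
  have h : dcount S χ D w ≤ ((D + 1 : ℕ) : ℕ∞) := mod_cast dcount_le w
  exact (ENat.toNat_le_toNat h (ENat.natCast_ne_top _)).trans_eq (ENat.toNat_natCast _)

theorem dcount_anti [IsTrans W S] {a b : W} (hab : S a b) :
    dcount S χ D b ≤ dcount S χ D a := by
  refine min_le_min le_rfl (Set.encard_mono ?_)
  rintro v ⟨rfl | hbv, hχ⟩
  · exact ⟨Or.inr hab, hχ⟩
  · exact ⟨Or.inr (_root_.trans hab hbv), hχ⟩

end dcount

theorem stmt12 {W : Type} (R : W → W → Prop) (hTr : Transitive R)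
    (m : ℕ) (χ : Fin m → W → Prop) (D : Fin m → ℕ)
    (Rd : W → W → Prop)
    (hRd : ∀ w₁ w₂, Rd w₁ w₂ ↔
      (R w₁ w₂ ∧ ∀ j, dcount R (χ j) (D j) w₁ = dcount R (χ j) (D j) w₂))
    (R' : W → W → Prop)
    (hR' : ∀ w₁ w₂, R' w₁ w₂ ↔ Relation.TransGen (fun a b => R a b ∨ Rd b a) w₁ w₂) :
    ∀ k, ∀ ws : Fin (k + 1) → W,
      (∀ i : Fin k, R' (ws i.castSucc) (ws i.succ) ∧ ¬ R' (ws i.succ) (ws i.castSucc)) →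
      k ≤ (∑ j, D j) + m := by
  intro k ws hws
  have : IsTrans W R := ⟨hTr⟩
  let d : W → Fin m → ℕ∞ := fun w j => dcount R (χ j) (D j) w
  have hstep : ∀ a b, (R a b ∨ Rd b a) → d b ≤ d a := by
    rintro a b (h | h) j
    · exact dcount_anti h
    · exact (((hRd b a).mp h).2 j).le
  have hrev : ∀ a b, (R a b ∨ Rd b a) → d a = d b → (R b a ∨ Rd a b) := by
    rintro a b (h | h) heq
    · exact .inr ((hRd a b).mpr ⟨h, congrFun heq⟩)
    · exact .inl ((hRd b a).mp h).1
  refine Fin.le_of_strictAnti_of_le (g := fun i => ∑ j, (d (ws i) j).toNat)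
    (Fin.strictAnti_iff_succ_lt.mpr fun i => ?_) fun i => ?_
  · obtain ⟨hfwd, hback⟩ := hws i
    rw [hR'] at hfwd hback
    exact ENat.sum_toNat_lt_sum_toNat (fun j => dcount_ne_top _)
      (hfwd.lt_of_not_transGen hstep hrev hback)
  · calc ∑ j, (d (ws i) j).toNat ≤ ∑ j, (D j + 1) :=
        Finset.sum_le_sum fun j _ => dcount_toNat_le _
      _ = (∑ j, D j) + m := by simp [Finset.sum_add_distrib]
end

section
/- Let 𝔄 = (W,R,V) be transitive and let R' be the transitive closure of R ∪ R_d⁻¹, where R_d = {(w₁,w₂) ∈ R | d^j(w₁) = d^j(w₂) for all j ≤ m} and d^j(w) = min(D_j+1, |{v : R* w v and 𝔄 ⊨_v χ_j}|) with R* the reflexive closure of R. Then d^j computed in (W,R',V) equals d^j computed in (W,R,V) for every world w and every j. -/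
/-
Once the count at `w` is below its cap `D + 1`, it is the exact size of the cone of `w` (its
`χ`-worlds among `w` and its `R`-successors). Walking forward along `R` only shrinks cones
(transitivity), and walking backward along an `R_d`-edge from `a` to `b` enlarges the cone of `a`
to that of `b` while keeping the capped count, which is uncapped at `a`; so the two cones are
equal. Hence every world `R'`-reachable from `w` has its cone inside that of `w`, and the
`R'`-cone of `w` is its `R`-cone.
-/

namespace Set

variable {α : Type*} {s t : Set α} {c : ℕ∞}

theorem eq_of_subset_of_min_encard_eq (hst : s ⊆ t) (h : min c t.encard = min c s.encard)
    (hs : s.encard < c) : t = s := by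
  rw [min_eq_right hs.le] at h
  have ht : t.encard = s.encard := by
    rcases le_total c t.encard with hct | htc
    · rw [min_eq_left hct] at h
      exact absurd h.symm hs.ne
    · rwa [min_eq_right htc] at h
  have hfin : s.Finite := encard_lt_top_iff.1 (hs.trans_le le_top)
  exact (hfin.eq_of_subset_of_encard_le hst ht.le).symm

theorem min_encard_eq_of_subset (hst : s ⊆ t) (hts : s.encard < c → t ⊆ s) :
    min c t.encard = min c s.encard := by
  rcases le_or_gt c s.encard with hcs | hs
  · rw [min_eq_left hcs, min_eq_left (hcs.trans (encard_le_encard hst))]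
  · rw [(hts hs).antisymm hst]

end Set

namespace dcount

variable {W : Type} {R : W → W → Prop} {χ : W → Prop} {D : ℕ}

def cone (S : W → W → Prop) (χ : W → Prop) (w : W) : Set W := {v | (v = w ∨ S w v) ∧ χ v}

theorem eq_min_encard_cone (S : W → W → Prop) (w : W) :
    dcount S χ D w = min ((D : ℕ∞) + 1) (cone S χ w).encard := rfl

theorem cone_mono {S T : W → W → Prop} (hST : ∀ a b, S a b → T a b) (w : W) :
    cone S χ w ⊆ cone T χ w :=
  fun _ ⟨hv, hχ⟩ => ⟨hv.imp_right (hST _ _), hχ⟩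

theorem cone_subset_of_rel (hTr : Transitive R) {a b : W} (hab : R a b) :
    cone R χ b ⊆ cone R χ a := by
  rintro v ⟨rfl | hbv, hχ⟩
  · exact ⟨Or.inr hab, hχ⟩
  · exact ⟨Or.inr (hTr hab hbv), hχ⟩

theorem cone_subset_of_step (hTr : Transitive R) {Rd : W → W → Prop}
    (hRd : ∀ a b, Rd a b → R a b ∧ dcount R χ D a = dcount R χ D b) {a b : W}
    (hab : R a b ∨ Rd b a) (ha : (cone R χ a).encard < (D : ℕ∞) + 1) :
    cone R χ b ⊆ cone R χ a := by
  rcases hab with hab | hba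
  · exact cone_subset_of_rel hTr hab
  · obtain ⟨hba, hcount⟩ := hRd b a hba
    exact (Set.eq_of_subset_of_min_encard_eq (cone_subset_of_rel hTr hba) hcount ha).le

theorem cone_subset_of_reflTransGen (hTr : Transitive R) {Rd : W → W → Prop}
    (hRd : ∀ a b, Rd a b → R a b ∧ dcount R χ D a = dcount R χ D b) {w v : W}
    (hw : (cone R χ w).encard < (D : ℕ∞) + 1)
    (hwv : Relation.ReflTransGen (fun a b => R a b ∨ Rd b a) w v) :
    cone R χ v ⊆ cone R χ w := by
  induction hwv with
  | refl => rfl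
  | tail _ huv ih =>
    exact (cone_subset_of_step hTr hRd huv ((Set.encard_le_encard ih).trans_lt hw)).trans ih

end dcount

open dcount in
theorem stmt13 {W : Type} (R : W → W → Prop) (hTr : Transitive R)
    (m : ℕ) (χ : Fin m → W → Prop) (D : Fin m → ℕ)
    (Rd : W → W → Prop)
    (hRd : ∀ w₁ w₂, Rd w₁ w₂ ↔
      (R w₁ w₂ ∧ ∀ j, dcount R (χ j) (D j) w₁ = dcount R (χ j) (D j) w₂))
    (R' : W → W → Prop)
    (hR' : ∀ w₁ w₂, R' w₁ w₂ ↔ Relation.TransGen (fun a b => R a b ∨ Rd b a) w₁ w₂) :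
    ∀ (j : Fin m) (w : W), dcount R' (χ j) (D j) w = dcount R (χ j) (D j) w := by
  intro j w
  have hRd_j : ∀ a b, Rd a b → R a b ∧ dcount R (χ j) (D j) a = dcount R (χ j) (D j) b :=
    fun a b h => ((hRd a b).1 h).imp_right (· j)
  have hRR' : ∀ a b, R a b → R' a b := fun a b h => (hR' a b).2 (.single (.inl h))
  rw [eq_min_encard_cone, eq_min_encard_cone]
  refine Set.min_encard_eq_of_subset (cone_mono hRR' w) fun hw => ?_
  rintro v ⟨rfl | hwv, hχ⟩
  · exact ⟨.inl rfl, hχ⟩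
  · exact cone_subset_of_reflTransGen hTr hRd_j hw ((hR' w v).1 hwv).to_reflTransGen
      ⟨.inl rfl, hχ⟩
end

section
/- The graded modal formula φ := q₀ ∧ ◇_{≥2}(¬q₀ ∧ q₁ ∧ ◇_{≥1}(¬q₀ ∧ ¬q₁)) ∧ ◇_{≤1} ¬q₁ is satisfiable over some transitive frame, but is not satisfiable at the root of any transitive structure whose underlying strict-successor graph is a tree; more precisely, if 𝔄 = (W,R,V) is transitive and 𝔄 ⊨_{w₀} φ, then there exist distinct worlds w₁, w₂ with R w₀ w₁, R w₀ w₂, and a single common world w' with R w₁ w' and R w₂ w' — i.e., the accessibility structure below w₀ is not tree-shaped. -/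
inductive GML where
  | atom : ℕ → GML
  | neg : GML → GML
  | and : GML → GML → GML
  | diaGe : ℕ → GML → GML
  | diaLe : ℕ → GML → GML

def Sat {W : Type} (R : W → W → Prop) (V : ℕ → W → Prop) : W → GML → Prop
  | w, .atom p => V p w
  | w, .neg φ => ¬ Sat R V w φ
  | w, .and φ ψ => Sat R V w φ ∧ Sat R V w ψ
  | w, .diaGe C φ => (C : Cardinal) ≤ Cardinal.mk {v : W // R w v ∧ Sat R V v φ}
  | w, .diaLe C φ => Cardinal.mk {v : W // R w v ∧ Sat R V v φ} ≤ (C : Cardinal)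

/-- φ := q₀ ∧ ◇_{≥2}(¬q₀ ∧ q₁ ∧ ◇_{≥1}(¬q₀ ∧ ¬q₁)) ∧ ◇_{≤1} ¬q₁,
    with q₀ = atom 0 and q₁ = atom 1. -/
def phi : GML :=
  .and (.atom 0)
    (.and
      (.diaGe 2 (.and (.neg (.atom 0))
        (.and (.atom 1) (.diaGe 1 (.and (.neg (.atom 0)) (.neg (.atom 1)))))))
      (.diaLe 1 (.neg (.atom 1))))

/-!
In a transitive structure satisfying `phi` at `w₀`, the two distinct `q₁`-successors `w₁, w₂`
each see a world satisfying `¬q₀ ∧ ¬q₁`; by transitivity these worlds are `¬q₁`-successors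
of `w₀`, and `◇_{≤1} ¬q₁` forces them to coincide. Conversely, the transitive closure of
the diamond `0 → {1, 2} → 3` satisfies `phi` at `0`, with `q₀` true only at `0` and `q₁`
only at `1` and `2`.
-/

namespace Sat

variable {W : Type} {R : W → W → Prop} {V : ℕ → W → Prop} {w : W} {φ : GML}

theorem diaGe_one_iff : Sat R V w (.diaGe 1 φ) ↔ ∃ v, R w v ∧ Sat R V v φ := by
  simp only [Sat, Nat.cast_one, Cardinal.one_le_iff_ne_zero, Cardinal.mk_ne_zero_iff,
    nonempty_subtype]

theorem diaGe_two_iff :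
    Sat R V w (.diaGe 2 φ) ↔
      ∃ u v, u ≠ v ∧ R w u ∧ Sat R V u φ ∧ R w v ∧ Sat R V v φ := by
  simp only [Sat, Nat.cast_ofNat, Cardinal.two_le_iff, ne_eq, Subtype.exists, Subtype.mk.injEq]
  aesop

theorem diaLe_one_iff :
    Sat R V w (.diaLe 1 φ) ↔
      ∀ u v, R w u → Sat R V u φ → R w v → Sat R V v φ → u = v := by
  simp only [Sat, Nat.cast_one, Cardinal.le_one_iff_subsingleton, subsingleton_iff,
    Subtype.forall, Subtype.mk.injEq]
  aesop

end Sat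

theorem exists_confluent_successors_of_sat_phi {W : Type} {R : W → W → Prop}
    {V : ℕ → W → Prop} {w₀ : W} (hR : Transitive R) (hφ : Sat R V w₀ phi) :
    ∃ w₁ w₂ w', w₁ ≠ w₂ ∧ R w₀ w₁ ∧ R w₀ w₂ ∧ R w₁ w' ∧ R w₂ w' := by
  obtain ⟨-, hTwo, hAtMostOne⟩ := hφ
  obtain ⟨w₁, w₂, hne, hw₁, ⟨-, -, hsee₁⟩, hw₂, ⟨-, -, hsee₂⟩⟩ := Sat.diaGe_two_iff.mp hTwo
  obtain ⟨v₁, hv₁, -, hnq₁⟩ := Sat.diaGe_one_iff.mp hsee₁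
  obtain ⟨v₂, hv₂, -, hnq₂⟩ := Sat.diaGe_one_iff.mp hsee₂
  have hv : v₁ = v₂ :=
    Sat.diaLe_one_iff.mp hAtMostOne v₁ v₂ (hR hw₁ hv₁) hnq₁ (hR hw₂ hv₂) hnq₂
  exact ⟨w₁, w₂, v₁, hne, hw₁, hw₂, hv₁, hv ▸ hv₂⟩

def diamond (a b : Fin 4) : Prop :=
  (a = 0 ∧ b ≠ 0) ∨ ((a = 1 ∨ a = 2) ∧ b = 3)

instance : DecidableRel diamond := fun _ _ => by unfold diamond; infer_instance

def diamondValuation : ℕ → Fin 4 → Prop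
  | 0, w => w = 0
  | 1, w => w = 1 ∨ w = 2
  | _, _ => False

theorem transitive_diamond : Transitive diamond := by
  unfold Transitive; decide

theorem sat_diamond_phi : Sat diamond diamondValuation 0 phi := by
  simp only [phi, Sat.eq_1, Sat.eq_2, Sat.eq_3, Sat.diaGe_two_iff, Sat.diaGe_one_iff,
    Sat.diaLe_one_iff, diamondValuation]
  exact ⟨trivial, by decide, by decide⟩

theorem stmt17 :
    (∃ (W : Type) (R : W → W → Prop) (V : ℕ → W → Prop) (w₀ : W),
      Transitive R ∧ Sat R V w₀ phi) ∧
    (∀ (W : Type) (R : W → W → Prop) (V : ℕ → W → Prop) (w₀ : W),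
      Transitive R → Sat R V w₀ phi →
      ∃ w₁ w₂ w', w₁ ≠ w₂ ∧ R w₀ w₁ ∧ R w₀ w₂ ∧ R w₁ w' ∧ R w₂ w') :=
  ⟨⟨Fin 4, diamond, diamondValuation, 0, transitive_diamond, sat_diamond_phi⟩,
    fun _ _ _ _ => exists_confluent_successors_of_sat_phi⟩
end
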